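/- arXiv:1704.07062 — 4 statements merged into one kernel-verified Lean document; each statement's English description precedes it below -/
import Mathlib

section
/- Let (V, r, p) be a finite rooted tree with at least two vertices (i.e., there exists v ∈ V with v ≠ r), and let A be a finite type. Then the subspace H⁻ = {(t, s) ∈ H | (∃ a ∈ A, s(a) = 0) or (∃ v ∈ V, t(v) = 0 or t(v) = 1)} of H is contractible. (This is the contractibility of the boundary subspace H⁻(𝒯), established in the proof of Proposition B1 via the explicit two-stage homotopy ℋ that sends the values of the leaves to 1, the value of the root to 0, the values of the remaining vertices to 1/2, and then the values of the A-coordinates to 1.) -/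
open Set

/-- The parameter space `H(𝒯)` of the paper: pairs `(t, s)` of families of real
numbers in `[0,1]`, indexed by the vertices `V` of a rooted tree (with parent map
`p`) and by a finite type `A`, such that `t v ≥ t (p v)` for every vertex `v`. -/
def treeParamSet (V A : Type) (p : V → V) : Set ((V → ℝ) × (A → ℝ)) :=
  {x | (∀ v, x.1 v ∈ Icc (0 : ℝ) 1) ∧ (∀ a, x.2 a ∈ Icc (0 : ℝ) 1) ∧
    ∀ v, x.1 (p v) ≤ x.1 v}

/-- Contractibility of the boundary subspace `H⁻(𝒯)`, for a rooted tree with at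
least two vertices. -/
theorem stmt2 (V : Type) [Fintype V] (r : V) (p : V → V)
    (hroot : p r = r) (hconn : ∀ v : V, ∃ n : ℕ, p^[n] v = r)
    (hV : ∃ v : V, v ≠ r)
    (A : Type) [Fintype A] :
    ContractibleSpace
      {x ∈ treeParamSet V A p |
        (∃ a, x.2 a = 0) ∨ ∃ v, x.1 v = 0 ∨ x.1 v = 1} := by
  classical
  obtain ⟨v₀, hv₀⟩ := hV
  have hroot_le : ∀ (t : V → ℝ), (∀ v, t (p v) ≤ t v) → ∀ v, t r ≤ t v := by
    intro t ht v
    obtain ⟨n, hn⟩ := hconn v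
    rw [← hn]
    clear hn
    induction n with
    | zero => simp
    | succ n ih =>
      rw [Function.iterate_succ_apply']
      exact (ht _).trans ih
  set T : Set ((V → ℝ) × (A → ℝ)) :=
    {x ∈ treeParamSet V A p |
      (∃ a, x.2 a = 0) ∨ ∃ v, x.1 v = 0 ∨ x.1 v = 1} with hT
  have hc : ((fun _ => (0:ℝ), fun _ => (0:ℝ)) : (V → ℝ) × (A → ℝ)) ∈ T := by
    refine ⟨⟨fun v => ⟨le_rfl, zero_le_one⟩, fun a => ⟨le_rfl, zero_le_one⟩,
      fun v => le_rfl⟩, Or.inr ⟨r, Or.inl rfl⟩⟩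
  -- the deformation
  set G : ℝ → ((V → ℝ) × (A → ℝ)) → ((V → ℝ) × (A → ℝ)) := fun θ x =>
    (fun v => (1 - max (2*θ-1) 0) * (if v = r then 1 - min (2*θ) 1 else 1) * x.1 v,
     fun i => (1 - max (2*θ-1) 0) * x.2 i) with hGdef
  have hG : ∀ θ : ℝ, θ ∈ Icc (0:ℝ) 1 → ∀ x ∈ T, G θ x ∈ T := by
    rintro θ ⟨hθ0, hθ1⟩ ⟨t, s⟩ ⟨⟨ht1, hs1, hmono⟩, hbd⟩
    have hb0 : (0:ℝ) ≤ max (2*θ-1) 0 := le_max_right _ _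
    have hb1 : max (2*θ-1) 0 ≤ 1 := max_le (by linarith) zero_le_one
    have ha0 : (0:ℝ) ≤ min (2*θ) 1 := le_min (by linarith) zero_le_one
    have ha1 : min (2*θ) 1 ≤ 1 := min_le_right _ _
    set b := max (2*θ-1) 0 with hbdef
    set a := min (2*θ) 1 with hadef
    have hcoef : ∀ v : V, 0 ≤ (if v = r then 1 - a else (1:ℝ)) ∧
        (if v = r then 1 - a else (1:ℝ)) ≤ 1 := by
      intro v; split_ifs <;> constructor <;> linarith
    refine ⟨⟨?_, ?_, ?_⟩, ?_⟩
    · intro v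
      obtain ⟨hc0, hc1⟩ := hcoef v
      obtain ⟨htv0, htv1⟩ := ht1 v
      constructor
      · exact mul_nonneg (mul_nonneg (by linarith) hc0) htv0
      · calc (1 - b) * (if v = r then 1 - a else (1:ℝ)) * t v
            ≤ 1 * 1 * 1 := by
              apply mul_le_mul (mul_le_mul (by linarith) hc1 hc0 zero_le_one) htv1 htv0
              norm_num
          _ = 1 := by norm_num
    · intro i
      obtain ⟨hi0, hi1⟩ := hs1 i
      refine ⟨mul_nonneg (by linarith) hi0, ?_⟩
      show (1 - b) * s i ≤ 1
      nlinarith [mul_nonneg hb0 hi0]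
    · intro v
      by_cases hv : v = r
      · subst hv; rw [hroot]
      · show (1 - b) * (if p v = r then 1 - a else 1) * t (p v) ≤
          (1 - b) * (if v = r then 1 - a else 1) * t v
        simp only [if_neg hv]
        by_cases hpv : p v = r
        · rw [hpv, if_pos rfl]
          have h1 : t r ≤ t v := hroot_le t hmono v
          have h2 : 0 ≤ t r := (ht1 r).1
          nlinarith [mul_nonneg (mul_nonneg (by linarith : (0:ℝ) ≤ 1 - b) h2) ha0,
            mul_nonneg (by linarith : (0:ℝ) ≤ 1 - b) (by linarith : (0:ℝ) ≤ t v - t r)]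
        · rw [if_neg hpv]
          have h1 : t (p v) ≤ t v := hmono v
          nlinarith [mul_nonneg (by linarith : (0:ℝ) ≤ 1 - b)
            (by linarith : (0:ℝ) ≤ t v - t (p v))]
    · by_cases hθ : θ ≤ 1/2
      · have hbz : b = 0 := max_eq_right (by linarith)
        rcases hbd with ⟨i, hi⟩ | ⟨v, hv | hv⟩
        · refine Or.inl ⟨i, ?_⟩
          show (1 - b) * s i = 0
          rw [show s i = 0 from hi, mul_zero]
        · refine Or.inr ⟨v, Or.inl ?_⟩
          show (1 - b) * (if v = r then 1 - a else 1) * t v = 0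
          rw [show t v = 0 from hv, mul_zero]
        · by_cases hvr : v = r
          · subst hvr
            have h1 : t v₀ = 1 := le_antisymm (ht1 v₀).2
              ((show t v = 1 from hv) ▸ hroot_le t hmono v₀)
            refine Or.inr ⟨v₀, Or.inr ?_⟩
            show (1 - b) * (if v₀ = v then 1 - a else 1) * t v₀ = 1
            rw [if_neg hv₀, h1, hbz]; ring
          · refine Or.inr ⟨v, Or.inr ?_⟩
            show (1 - b) * (if v = r then 1 - a else 1) * t v = 1
            rw [if_neg hvr, show t v = 1 from hv, hbz]; ring
      · have haz : a = 1 := min_eq_right (by linarith)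
        refine Or.inr ⟨r, Or.inl ?_⟩
        show (1 - b) * (if r = r then 1 - a else 1) * t r = 0
        rw [if_pos rfl, haz]; ring
  rw [contractible_iff_id_nullhomotopic]
  refine ⟨⟨_, hc⟩, ?_⟩
  constructor
  refine ContinuousMap.Homotopy.mk
    ⟨fun q => ⟨G (q.1 : ℝ) (q.2 : (V → ℝ) × (A → ℝ)), hG _ q.1.2 _ q.2.2⟩, ?_⟩ ?_ ?_
  · apply Continuous.subtype_mk
    apply Continuous.prodMk
    · apply continuous_pi
      intro v
      by_cases hv : v = r <;> simp only [hv, if_true, if_neg, not_false_iff] <;> fun_prop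
    · apply continuous_pi
      intro i
      fun_prop
  · intro x
    apply Subtype.ext
    have h0 : (((0 : unitInterval) : ℝ)) = 0 := rfl
    have hm1 : ((2:ℝ) * 0 - 1) ⊔ 0 = 0 := by norm_num
    have hm2 : ((2:ℝ) * 0) ⊓ 1 = 0 := by norm_num
    refine Prod.ext (funext fun v => ?_) (funext fun i => ?_)
    · show ((1 - (2 * ((0:unitInterval):ℝ) - 1) ⊔ 0) *
        if v = r then 1 - 2 * ((0:unitInterval):ℝ) ⊓ 1 else 1) *
          (x : (V → ℝ) × (A → ℝ)).1 v = (x : (V → ℝ) × (A → ℝ)).1 v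
      rw [h0, hm1, hm2]
      split_ifs <;> ring
    · show (1 - (2 * ((0:unitInterval):ℝ) - 1) ⊔ 0) * (x : (V → ℝ) × (A → ℝ)).2 i
        = (x : (V → ℝ) × (A → ℝ)).2 i
      rw [h0, hm1]
      ring
  · intro x
    apply Subtype.ext
    have h0 : (((1 : unitInterval) : ℝ)) = 1 := rfl
    have hm1 : ((2:ℝ) * 1 - 1) ⊔ 0 = 1 := by norm_num
    refine Prod.ext (funext fun v => ?_) (funext fun i => ?_)
    · show ((1 - (2 * ((1:unitInterval):ℝ) - 1) ⊔ 0) *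
        if v = r then 1 - 2 * ((1:unitInterval):ℝ) ⊓ 1 else 1) *
          (x : (V → ℝ) × (A → ℝ)).1 v = (0:ℝ)
      rw [h0, hm1]
      split_ifs <;> ring
    · show (1 - (2 * ((1:unitInterval):ℝ) - 1) ⊔ 0) * (x : (V → ℝ) × (A → ℝ)).2 i = (0:ℝ)
      rw [h0, hm1]
      ring
end

section
/- Let (V, r, p) be a finite rooted tree and let A be a nonempty finite type. Then the subspace {(t, s) ∈ H | ∃ a ∈ A, s(a) = 1} of H is contractible. (This is the contractibility of the subspace H(𝒯; 𝒯′) of parameter families having at least one auxiliary coordinate equal to 1, used in the proof of Proposition B6.) -/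
open Set

/-- Contractibility of the subspace `H(𝒯; 𝒯′)` of parameter families having at
least one auxiliary coordinate equal to `1`. -/
theorem stmt3 (V : Type) [Fintype V] (r : V) (p : V → V)
    (hroot : p r = r) (hconn : ∀ v : V, ∃ n : ℕ, p^[n] v = r)
    (A : Type) [Fintype A] [Nonempty A] :
    ContractibleSpace {x ∈ treeParamSet V A p | ∃ a, x.2 a = 1} := by
  set c : (V → ℝ) × (A → ℝ) := (fun _ => 1, fun _ => 1) with hc
  have hcmem : c ∈ {x ∈ treeParamSet V A p | ∃ a, x.2 a = 1} := by
    refine ⟨⟨fun v => ⟨zero_le_one, le_refl 1⟩, fun a => ⟨zero_le_one, le_refl 1⟩,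
      fun v => le_refl 1⟩, ⟨Classical.arbitrary A, rfl⟩⟩
  have hstar : StarConvex ℝ c {x ∈ treeParamSet V A p | ∃ a, x.2 a = 1} := by
    intro y hy a b ha hb hab
    obtain ⟨⟨h1, h2, h3⟩, w, hw⟩ := hy
    have key : ∀ u : ℝ, u ∈ Icc (0:ℝ) 1 → a * 1 + b * u ∈ Icc (0:ℝ) 1 := by
      intro u hu
      constructor
      · have := mul_nonneg hb hu.1
        nlinarith
      · nlinarith [hu.2, mul_le_mul_of_nonneg_left hu.2 hb]
    refine ⟨⟨fun v => key _ (h1 v), fun t => key _ (h2 t), ?_⟩, ⟨w, ?_⟩⟩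
    · intro v
      simp only [Prod.fst_add, Prod.smul_fst, Pi.add_apply, Pi.smul_apply, smul_eq_mul, hc]
      nlinarith [h3 v]
    · simp only [Prod.snd_add, Prod.smul_snd, Pi.add_apply, Pi.smul_apply, smul_eq_mul, hc, hw]
      linarith
  exact hstar.contractibleSpace ⟨c, hcmem⟩
end

section
/- Let (V, r, p) be a finite rooted tree with at least two vertices (i.e., there exists v ∈ V with v ≠ r), and let A be a nonempty finite type. Then the subspace {(t, s) ∈ H | (∃ a ∈ A, s(a) = 1) and ((∃ a′ ∈ A, s(a′) = 0) or (∃ v ∈ V, t(v) = 0 or t(v) = 1))} of H is contractible. (This is the contractibility of the subspace H⁻(𝒯; 𝒯′) used in the proof of Proposition B6, obtained by restricting the explicit homotopy ℋ from the proof of Proposition B1.) -/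
open Set

private lemma iterLe {V : Type} (p : V → V) (t : V → ℝ)
    (hm : ∀ v, t (p v) ≤ t v) : ∀ n v, t (p^[n] v) ≤ t v := by
  intro n
  induction n with
  | zero => intro v; simp
  | succ n ih =>
      intro v
      rw [Function.iterate_succ_apply]
      exact (ih (p v)).trans (hm v)

/-- Contractibility of the subspace `H⁻(𝒯; 𝒯′)`, for a rooted tree with at least
two vertices and a nonempty auxiliary indexing type. -/
theorem stmt4 (V : Type) [Fintype V] (r : V) (p : V → V)
    (hroot : p r = r) (hconn : ∀ v : V, ∃ n : ℕ, p^[n] v = r)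
    (hV : ∃ v : V, v ≠ r)
    (A : Type) [Fintype A] [Nonempty A] :
    ContractibleSpace
      {x ∈ treeParamSet V A p |
        (∃ a, x.2 a = 1) ∧
          ((∃ a', x.2 a' = 0) ∨ ∃ v, x.1 v = 0 ∨ x.1 v = 1)} := by
  classical
  obtain ⟨v₀, hv₀⟩ := hV
  obtain ⟨a₀⟩ := ‹Nonempty A›
  set K : Set ((V → ℝ) × (A → ℝ)) :=
    {x ∈ treeParamSet V A p |
      (∃ a, x.2 a = 1) ∧
        ((∃ a', x.2 a' = 0) ∨ ∃ v, x.1 v = 0 ∨ x.1 v = 1)} with hKdef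
  have hrle : ∀ (t : V → ℝ), (∀ v, t (p v) ≤ t v) → ∀ v, t r ≤ t v := by
    intro t hm v
    obtain ⟨n, hn⟩ := hconn v
    calc t r = t (p^[n] v) := by rw [hn]
    _ ≤ t v := iterLe p t hm n v
  -- the endpoint
  have hxinf : ((fun v => if v = r then (0:ℝ) else 1, fun _ => (1:ℝ)) :
      (V → ℝ) × (A → ℝ)) ∈ K := by
    refine ⟨⟨?_, ?_, ?_⟩, ⟨a₀, rfl⟩, Or.inr ⟨r, Or.inl (by simp)⟩⟩
    · intro v; dsimp only; split_ifs <;> constructor <;> norm_num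
    · intro a; exact ⟨zero_le_one, le_refl 1⟩
    · intro v; dsimp only
      by_cases hv : v = r
      · subst hv; rw [hroot]
      · rw [if_neg hv]; split_ifs <;> norm_num
  let xinf : K := ⟨_, hxinf⟩
  -- stage 1 membership: scale t r by (1-μ)
  have mem_h1 : ∀ (μ : ℝ), 0 ≤ μ → μ ≤ 1 → ∀ x : K,
      ((fun v => if v = r then (1-μ) * x.val.1 r else x.val.1 v, x.val.2) :
        (V → ℝ) × (A → ℝ)) ∈ K := by
    intro μ hμ0 hμ1 x
    obtain ⟨⟨ht, hs, hm⟩, ⟨a1, ha1⟩, hdis⟩ := x.2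
    refine ⟨⟨?_, hs, ?_⟩, ⟨a1, ha1⟩, ?_⟩
    · intro v; dsimp only; split_ifs with h
      · exact ⟨mul_nonneg (by linarith) (ht r).1,
          by nlinarith [(ht r).1, (ht r).2]⟩
      · exact ht v
    · intro v; dsimp only
      by_cases hv : v = r
      · subst hv; rw [hroot]
      · rw [if_neg hv]
        split_ifs with h
        · have h2 := hm v; rw [h] at h2
          nlinarith [(ht r).1]
        · exact hm v
    · rcases hdis with ⟨a', ha'⟩ | ⟨v, hv⟩
      · exact Or.inl ⟨a', ha'⟩
      · by_cases hvr : v = r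
        · rw [hvr] at hv
          rcases hv with h0 | h1
          · exact Or.inr ⟨r, Or.inl (by simp [h0])⟩
          · have hv1 : x.val.1 v₀ = 1 :=
              le_antisymm (ht v₀).2 (h1 ▸ hrle x.val.1 hm v₀)
            exact Or.inr ⟨v₀, Or.inr (by simp [hv₀, hv1])⟩
        · refine Or.inr ⟨v, ?_⟩
          dsimp only; rw [if_neg hvr]; exact hv
  -- stage 1 endpoint / f1 membership
  have mem_f1 : ∀ x : K,
      ((fun v => if v = r then (0:ℝ) else x.val.1 v, x.val.2) :
        (V → ℝ) × (A → ℝ)) ∈ K := by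
    intro x
    obtain ⟨⟨ht, hs, hm⟩, ⟨a1, ha1⟩, _⟩ := x.2
    refine ⟨⟨?_, hs, ?_⟩, ⟨a1, ha1⟩, Or.inr ⟨r, Or.inl (by simp)⟩⟩
    · intro v; dsimp only; split_ifs with h
      · exact ⟨le_refl 0, zero_le_one⟩
      · exact ht v
    · intro v; dsimp only
      by_cases hv : v = r
      · subst hv; rw [hroot]
      · rw [if_neg hv]
        split_ifs with h
        · exact (ht v).1
        · exact hm v
  -- stage 2 membership: push s towards 1
  have mem_h2 : ∀ (μ : ℝ), 0 ≤ μ → μ ≤ 1 → ∀ x : K,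
      ((fun v => if v = r then (0:ℝ) else x.val.1 v,
        fun a => (1-μ) * x.val.2 a + μ) : (V → ℝ) × (A → ℝ)) ∈ K := by
    intro μ hμ0 hμ1 x
    obtain ⟨⟨ht, hs, hm⟩, ⟨a1, ha1⟩, _⟩ := x.2
    refine ⟨⟨?_, ?_, ?_⟩, ⟨a1, by dsimp only; rw [ha1]; ring⟩,
      Or.inr ⟨r, Or.inl (by simp)⟩⟩
    · intro v; dsimp only; split_ifs with h
      · exact ⟨le_refl 0, zero_le_one⟩
      · exact ht v
    · intro a; dsimp only
      exact ⟨by nlinarith [(hs a).1], by nlinarith [(hs a).2]⟩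
    · intro v; dsimp only
      by_cases hv : v = r
      · subst hv; rw [hroot]
      · rw [if_neg hv]
        split_ifs with h
        · exact (ht v).1
        · exact hm v
  -- f2 membership
  have mem_f2 : ∀ x : K,
      ((fun v => if v = r then (0:ℝ) else x.val.1 v, fun _ => (1:ℝ)) :
        (V → ℝ) × (A → ℝ)) ∈ K := by
    intro x
    obtain ⟨⟨ht, hs, hm⟩, _, _⟩ := x.2
    refine ⟨⟨?_, fun a => ⟨zero_le_one, le_refl 1⟩, ?_⟩, ⟨a₀, rfl⟩,
      Or.inr ⟨r, Or.inl (by simp)⟩⟩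
    · intro v; dsimp only; split_ifs with h
      · exact ⟨le_refl 0, zero_le_one⟩
      · exact ht v
    · intro v; dsimp only
      by_cases hv : v = r
      · subst hv; rw [hroot]
      · rw [if_neg hv]
        split_ifs with h
        · exact (ht v).1
        · exact hm v
  -- stage 3 membership
  have mem_h3 : ∀ (μ : ℝ), 0 ≤ μ → μ ≤ 1 → ∀ x : K,
      ((fun v => if v = r then (0:ℝ) else (1-μ) * x.val.1 v + μ,
        fun _ => (1:ℝ)) : (V → ℝ) × (A → ℝ)) ∈ K := by
    intro μ hμ0 hμ1 x
    obtain ⟨⟨ht, hs, hm⟩, _, _⟩ := x.2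
    refine ⟨⟨?_, fun a => ⟨zero_le_one, le_refl 1⟩, ?_⟩, ⟨a₀, rfl⟩,
      Or.inr ⟨r, Or.inl (by simp)⟩⟩
    · intro v; dsimp only; split_ifs with h
      · exact ⟨le_refl 0, zero_le_one⟩
      · exact ⟨by nlinarith [(ht v).1], by nlinarith [(ht v).2]⟩
    · intro v; dsimp only
      by_cases hv : v = r
      · subst hv; rw [hroot]
      · rw [if_neg hv]
        split_ifs with h
        · nlinarith [(ht v).1]
        · nlinarith [hm v]
  -- the continuous maps
  let f1 : C(K, K) :=
    ⟨fun x => ⟨(fun v => if v = r then (0:ℝ) else x.val.1 v, x.val.2),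
      mem_f1 x⟩, by first
      | fun_prop
      | (apply Continuous.subtype_mk
         refine Continuous.prodMk ?_ ?_ <;>
           [skip; fun_prop]
         apply continuous_pi
         intro v
         by_cases h : v = r
         · simp only [if_pos h]; fun_prop
         · simp only [if_neg h]; fun_prop)⟩
  let f2 : C(K, K) :=
    ⟨fun x => ⟨(fun v => if v = r then (0:ℝ) else x.val.1 v, fun _ => (1:ℝ)),
      mem_f2 x⟩, by first
      | fun_prop
      | (apply Continuous.subtype_mk
         refine Continuous.prodMk ?_ ?_ <;>
           [skip; fun_prop]
         apply continuous_pi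
         intro v
         by_cases h : v = r
         · simp only [if_pos h]; fun_prop
         · simp only [if_neg h]; fun_prop)⟩
  rw [contractible_iff_id_nullhomotopic]
  refine ⟨xinf, ?_⟩
  have H1 : (ContinuousMap.id K).Homotopy f1 := by
    refine ⟨⟨fun q => ⟨(fun v => if v = r then (1 - (q.1 : ℝ)) * q.2.val.1 r
        else q.2.val.1 v, q.2.val.2),
        mem_h1 q.1 q.1.2.1 q.1.2.2 q.2⟩, ?_⟩, ?_, ?_⟩
    · first
      | fun_prop
      | (apply Continuous.subtype_mk
         refine Continuous.prodMk ?_ ?_ <;>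
           [skip; fun_prop]
         apply continuous_pi
         intro v
         by_cases h : v = r
         · simp only [if_pos h]; fun_prop
         · simp only [if_neg h]; fun_prop)
    · intro x
      apply Subtype.ext
      refine Prod.ext ?_ rfl
      funext v
      by_cases h : v = r <;> simp [f1, f2, xinf, h]
    · intro x
      apply Subtype.ext
      refine Prod.ext ?_ rfl
      funext v
      by_cases h : v = r <;> simp [f1, f2, xinf, h]
  have H2 : f1.Homotopy f2 := by
    refine ⟨⟨fun q => ⟨(fun v => if v = r then (0:ℝ) else q.2.val.1 v,
        fun a => (1 - (q.1 : ℝ)) * q.2.val.2 a + (q.1 : ℝ)),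
        mem_h2 q.1 q.1.2.1 q.1.2.2 q.2⟩, ?_⟩, ?_, ?_⟩
    · first
      | fun_prop
      | (apply Continuous.subtype_mk
         refine Continuous.prodMk ?_ ?_ <;>
           [skip; fun_prop]
         apply continuous_pi
         intro v
         by_cases h : v = r
         · simp only [if_pos h]; fun_prop
         · simp only [if_neg h]; fun_prop)
    · intro x
      apply Subtype.ext
      refine Prod.ext rfl ?_
      funext a
      simp [f1, f2, xinf]
    · intro x
      apply Subtype.ext
      refine Prod.ext rfl ?_
      funext a
      simp [f1, f2, xinf]
  have H3 : f2.Homotopy (ContinuousMap.const K xinf) := by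
    refine ⟨⟨fun q => ⟨(fun v => if v = r then (0:ℝ)
        else (1 - (q.1 : ℝ)) * q.2.val.1 v + (q.1 : ℝ), fun _ => (1:ℝ)),
        mem_h3 q.1 q.1.2.1 q.1.2.2 q.2⟩, ?_⟩, ?_, ?_⟩
    · first
      | fun_prop
      | (apply Continuous.subtype_mk
         refine Continuous.prodMk ?_ ?_ <;>
           [skip; fun_prop]
         apply continuous_pi
         intro v
         by_cases h : v = r
         · simp only [if_pos h]; fun_prop
         · simp only [if_neg h]; fun_prop)
    · intro x
      apply Subtype.ext
      refine Prod.ext ?_ rfl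
      funext v
      by_cases h : v = r <;> simp [f1, f2, xinf, h]
    · intro x
      apply Subtype.ext
      refine Prod.ext ?_ rfl
      funext v
      by_cases h : v = r <;> simp [f1, f2, xinf, h]
  exact ⟨(H1.trans H2).trans H3⟩
end

section
/- (Proposition D1, first part; gluing cofibrations.) Let M be a model category, let 𝒟 be the span category with three objects *₁, *₂, *₃ and non-identity morphisms *₂ → *₁ and *₂ → *₃, let F₁, F₂ : 𝒟 → M be functors and t : F₁ ⟹ F₂ a natural transformation, and let f : colim F₁ → colim F₂ denote the induced map between the pushouts. If the component t₍*₃₎ : F₁(*₃) → F₂(*₃) is a cofibration and the canonical map from the relative latching object L₁(t) = F₁(*₁) ⊔_{F₁(*₂)} F₂(*₂) to F₂(*₁) is a cofibration, then f is a cofibration. -/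
open CategoryTheory CategoryTheory.Limits

universe v u

/-- A Quillen model structure on a category `M`: three classes of morphisms
(weak equivalences, cofibrations, fibrations) satisfying the two-out-of-three
axiom, closure under retracts, the lifting axioms and the factorization axioms.
(Completeness and cocompleteness are imposed separately as `HasLimits`/`HasColimits`
hypotheses.) -/
structure ModelStructure (M : Type u) [Category.{v} M] where
  weakEquivalence : MorphismProperty M
  cofibration : MorphismProperty M
  fibration : MorphismProperty M
  weq_comp : ∀ {X Y Z : M} (f : X ⟶ Y) (g : Y ⟶ Z),
    weakEquivalence f → weakEquivalence g → weakEquivalence (f ≫ g)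
  weq_of_comp_left : ∀ {X Y Z : M} (f : X ⟶ Y) (g : Y ⟶ Z),
    weakEquivalence f → weakEquivalence (f ≫ g) → weakEquivalence g
  weq_of_comp_right : ∀ {X Y Z : M} (f : X ⟶ Y) (g : Y ⟶ Z),
    weakEquivalence g → weakEquivalence (f ≫ g) → weakEquivalence f
  weq_retract : ∀ {X Y X' Y' : M} (f : X ⟶ Y) (g : X' ⟶ Y')
    (i : Arrow.mk f ⟶ Arrow.mk g) (s : Arrow.mk g ⟶ Arrow.mk f),
    i ≫ s = 𝟙 (Arrow.mk f) → weakEquivalence g → weakEquivalence f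
  cof_retract : ∀ {X Y X' Y' : M} (f : X ⟶ Y) (g : X' ⟶ Y')
    (i : Arrow.mk f ⟶ Arrow.mk g) (s : Arrow.mk g ⟶ Arrow.mk f),
    i ≫ s = 𝟙 (Arrow.mk f) → cofibration g → cofibration f
  fib_retract : ∀ {X Y X' Y' : M} (f : X ⟶ Y) (g : X' ⟶ Y')
    (i : Arrow.mk f ⟶ Arrow.mk g) (s : Arrow.mk g ⟶ Arrow.mk f),
    i ≫ s = 𝟙 (Arrow.mk f) → fibration g → fibration f
  lift_cof_trivFib : ∀ {A B X Y : M} (i : A ⟶ B) (q : X ⟶ Y),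
    cofibration i → fibration q → weakEquivalence q → HasLiftingProperty i q
  lift_trivCof_fib : ∀ {A B X Y : M} (i : A ⟶ B) (q : X ⟶ Y),
    cofibration i → weakEquivalence i → fibration q → HasLiftingProperty i q
  factorization₁ : ∀ {X Y : M} (f : X ⟶ Y), ∃ (Z : M) (i : X ⟶ Z) (q : Z ⟶ Y),
    cofibration i ∧ fibration q ∧ weakEquivalence q ∧ i ≫ q = f
  factorization₂ : ∀ {X Y : M} (f : X ⟶ Y), ∃ (Z : M) (i : X ⟶ Z) (q : Z ⟶ Y),
    cofibration i ∧ weakEquivalence i ∧ fibration q ∧ i ≫ q = f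

lemma cof_of_llp {M : Type u} [Category.{v} M] (S : ModelStructure M) {A B : M} (f : A ⟶ B)
    (h : ∀ {X Y : M} (p : X ⟶ Y), S.fibration p → S.weakEquivalence p →
      HasLiftingProperty f p) :
    S.cofibration f := by
  obtain ⟨Z, i, q, hi, hq, hw, hfac⟩ := S.factorization₁ f
  haveI := h q hq hw
  have sq : CommSq i f q (𝟙 B) := ⟨by simp [hfac]⟩
  refine S.cof_retract f i
    (Arrow.homMk (u := 𝟙 A) (v := sq.lift) (by simp [sq.fac_left]))
    (Arrow.homMk (u := 𝟙 A) (v := q) (by simp [hfac]))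
    ?_ hi
  ext
  · simp
  · simp [sq.fac_right]

/-- Proposition D1, first part (gluing cofibrations): for a natural transformation
`t : F₁ ⟶ F₂` between span-shaped diagrams (with `*₁ = left`, `*₂ = zero`,
`*₃ = right`), if the component `t_{*₃}` is a cofibration and the canonical map
from the relative latching object `L₁(t) = F₁(*₁) ⊔_{F₁(*₂)} F₂(*₂)` to `F₂(*₁)`
is a cofibration, then the induced map between the pushouts is a cofibration. -/
theorem stmt5 {M : Type u} [Category.{v} M] [HasLimits M] [HasColimits M]
    (S : ModelStructure M)
    (F₁ F₂ : WalkingSpan ⥤ M) (t : F₁ ⟶ F₂)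
    (h₃ : S.cofibration (t.app WalkingSpan.right))
    (hL : S.cofibration
      (pushout.desc (t.app WalkingSpan.left) (F₂.map WalkingSpan.Hom.fst)
        (t.naturality WalkingSpan.Hom.fst) :
        pushout (F₁.map WalkingSpan.Hom.fst) (t.app WalkingSpan.zero) ⟶
          F₂.obj WalkingSpan.left)) :
    S.cofibration (colimMap t) := by
  apply cof_of_llp S
  intro X Y p hfib hweq
  constructor
  intro u v sq
  -- lift on the right component
  haveI := S.lift_cof_trivFib _ p h₃ hfib hweq
  have sqr : CommSq (colimit.ι F₁ WalkingSpan.right ≫ u) (t.app WalkingSpan.right) p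
      (colimit.ι F₂ WalkingSpan.right ≫ v) :=
    ⟨by rw [Category.assoc, sq.w, ι_colimMap_assoc]⟩
  set ℓr := sqr.lift with hℓr
  have fr1 : t.app WalkingSpan.right ≫ ℓr = colimit.ι F₁ WalkingSpan.right ≫ u := sqr.fac_left
  have fr2 : ℓr ≫ p = colimit.ι F₂ WalkingSpan.right ≫ v := sqr.fac_right
  -- lift on the left component via the latching map
  haveI := S.lift_cof_trivFib _ p hL hfib hweq
  have ha : F₁.map WalkingSpan.Hom.fst ≫ colimit.ι F₁ WalkingSpan.left ≫ u =
      t.app WalkingSpan.zero ≫ F₂.map WalkingSpan.Hom.snd ≫ ℓr := by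
    rw [colimit.w_assoc, ← NatTrans.naturality_assoc, fr1, colimit.w_assoc]
  set a : pushout (F₁.map WalkingSpan.Hom.fst) (t.app WalkingSpan.zero) ⟶ X :=
    pushout.desc (colimit.ι F₁ WalkingSpan.left ≫ u) (F₂.map WalkingSpan.Hom.snd ≫ ℓr) ha
    with hadef
  have sql : CommSq a
      (pushout.desc (t.app WalkingSpan.left) (F₂.map WalkingSpan.Hom.fst)
        (t.naturality WalkingSpan.Hom.fst)) p (colimit.ι F₂ WalkingSpan.left ≫ v) := by
    constructor
    apply pushout.hom_ext
    · rw [pushout.inl_desc_assoc, pushout.inl_desc_assoc, ← ι_colimMap_assoc, ← sq.w,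
        Category.assoc]
    · rw [pushout.inr_desc_assoc, pushout.inr_desc_assoc, Category.assoc, fr2,
        colimit.w_assoc, colimit.w_assoc]
  set ℓl := sql.lift with hℓl
  have hfacl := sql.fac_left
  have fl1 : t.app WalkingSpan.left ≫ ℓl = colimit.ι F₁ WalkingSpan.left ≫ u := by
    calc t.app WalkingSpan.left ≫ ℓl
        = pushout.inl _ _ ≫ (pushout.desc (t.app WalkingSpan.left)
            (F₂.map WalkingSpan.Hom.fst) (t.naturality WalkingSpan.Hom.fst)) ≫ ℓl := by
          rw [pushout.inl_desc_assoc]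
      _ = pushout.inl _ _ ≫ a := by rw [hfacl]
      _ = _ := by rw [hadef, pushout.inl_desc]
  have flz : F₂.map WalkingSpan.Hom.fst ≫ ℓl = F₂.map WalkingSpan.Hom.snd ≫ ℓr := by
    calc F₂.map WalkingSpan.Hom.fst ≫ ℓl
        = pushout.inr _ _ ≫ (pushout.desc (t.app WalkingSpan.left)
            (F₂.map WalkingSpan.Hom.fst) (t.naturality WalkingSpan.Hom.fst)) ≫ ℓl := by
          rw [pushout.inr_desc_assoc]
      _ = pushout.inr _ _ ≫ a := by rw [hfacl]
      _ = _ := by rw [hadef, pushout.inr_desc]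
  have fl2 : ℓl ≫ p = colimit.ι F₂ WalkingSpan.left ≫ v := sql.fac_right
  -- assemble the cocone lift
  set c : Cocone F₂ :=
    { pt := X
      ι :=
        { app := fun j => match j with
            | WalkingSpan.zero => F₂.map WalkingSpan.Hom.fst ≫ ℓl
            | WalkingSpan.left => ℓl
            | WalkingSpan.right => ℓr
          naturality := by
            rintro _ _ (_ | _ | _) <;> simp [flz] } } with hc
  set L : colimit F₂ ⟶ X := colimit.desc F₂ c with hLdef
  have hι : ∀ j, colimit.ι F₂ j ≫ L = c.ι.app j := fun j => colimit.ι_desc c j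
  refine ⟨⟨⟨L, ?_, ?_⟩⟩⟩
  · apply colimit.hom_ext
    rintro (_ | _ | _)
    · rw [ι_colimMap_assoc, hι]
      show t.app WalkingSpan.zero ≫ F₂.map WalkingSpan.Hom.fst ≫ ℓl = _
      rw [← NatTrans.naturality_assoc, fl1, colimit.w_assoc]
    · rw [ι_colimMap_assoc, hι]
      exact fl1
    · rw [ι_colimMap_assoc, hι]
      exact fr1
  · apply colimit.hom_ext
    rintro (_ | _ | _)
    · rw [← Category.assoc, hι]
      show (F₂.map WalkingSpan.Hom.fst ≫ ℓl) ≫ p = _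
      rw [Category.assoc, fl2, colimit.w_assoc]
    · rw [← Category.assoc, hι]; exact fl2
    · rw [← Category.assoc, hι]; exact fr2
end
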